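/- Let L and T be even positive integers. Define the complex subspace S = { v ∈ ℂ^{L+T} : v_j = 0 for all indices j with (L+T)/2 < j ≤ L+T−1 } (coordinates indexed 0 through L+T−1) and let P : ℂ^{L+T} → ℂ^T be the projection onto the last T coordinates. Then the complex dimension of the subspace P(D_{L+T}^{-1}(S)) ⊆ ℂ^T equals min(T, (L+T)/2 + 1). In particular, P(D_{L+T}^{-1}(S)) = ℂ^T if and only if L ≥ T − 2. -/

import Mathlib

/-- The (unnormalised) discrete Fourier transform matrix `D_N`,
with entries `(D_N)_{jk} = exp(−2πi·jk/N)`. -/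
noncomputable def Dmat (N : ℕ) : Matrix (Fin N) (Fin N) ℂ :=
  Matrix.of fun j k =>
    Complex.exp (-(2 * (Real.pi : ℂ) * Complex.I * (j : ℕ) * (k : ℕ)) / N)

/-- The inverse DFT matrix `D_N⁻¹ = (1/N)·D_N^*`. -/
noncomputable def DmatInv (N : ℕ) : Matrix (Fin N) (Fin N) ℂ :=
  ((N : ℂ)⁻¹) • (Dmat N).conjTranspose

/-- The subspace `S = { v ∈ ℂ^n : v_j = 0 for all j > half }`. -/
noncomputable def Ssub (n half : ℕ) : Submodule ℂ (Fin n → ℂ) where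
  carrier := {v | ∀ j : Fin n, half < j.val → v j = 0}
  add_mem' := by
    intro u v hu hv j hj
    simp [hu j hj, hv j hj]
  zero_mem' := by
    intro j hj
    rfl
  smul_mem' := by
    intro c v hv j hj
    simp [hv j hj]

/-- The ℂ-linear projection of `ℂ^{L+T}` onto its last `T` coordinates, for
`L = 2·(a+1)`, `T = 2·(b+1)`, `L+T = 2·(a+b+2)`. -/
def lastT (a b : ℕ) : (Fin (2 * (a + b + 2)) → ℂ) →ₗ[ℂ] (Fin (2 * (b + 1)) → ℂ) where
  toFun v := fun t => v ⟨2 * (a + 1) + t.val, by have := t.isLt; omega⟩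
  map_add' := by intros; rfl
  map_smul' := by intros; rfl

/-- The subspace `P(D_{L+T}⁻¹(S)) ⊆ ℂ^T`. -/
noncomputable def Vsub (a b : ℕ) : Submodule ℂ (Fin (2 * (b + 1)) → ℂ) :=
  Submodule.map (lastT a b)
    (Submodule.map (Matrix.mulVecLin (DmatInv (2 * (a + b + 2))))
      (Ssub (2 * (a + b + 2)) (a + b + 2)))

/-! With `ζ = exp(2πi/N)`, `N = L + T`, the entries of `D_N⁻¹` are `N⁻¹ ζ^{jk}`. Keeping only the
columns `j ≤ N/2` allowed by `S` and the rows `L + t` kept by `P`, the subspace is the column space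
of `N⁻¹ (ζ^{(L+t) j})`, a rectangular Vandermonde matrix whose `T` nodes `ζ^{L+t}` are distinct
since `L + t < N`. Its leading square block is an invertible Vandermonde matrix, so its rank is
`min(T, N/2 + 1)`. -/

open Matrix

noncomputable def dftRoot (N : ℕ) : ℂ := Complex.exp (2 * Real.pi * Complex.I / N)

theorem isPrimitiveRoot_dftRoot {N : ℕ} (hN : N ≠ 0) : IsPrimitiveRoot (dftRoot N) N :=
  Complex.isPrimitiveRoot_exp N hN

theorem Matrix.rank_rectVandermonde_one {K : Type*} [Field K] {p q : ℕ} {v : Fin p → K}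
    (hv : Function.Injective v) : (rectVandermonde v 1 q).rank = min p q := by
  refine le_antisymm (le_min (rank_le_height _) (rank_le_width _)) ?_
  have hsquare : (rectVandermonde v 1 q).submatrix (Fin.castLE (min_le_left p q))
      (Fin.castLE (min_le_right p q)) = vandermonde (v ∘ Fin.castLE (min_le_left p q)) := by
    ext i j
    simp [rectVandermonde_apply, vandermonde_apply]
  have hdet : (vandermonde (v ∘ Fin.castLE (min_le_left p q))).det ≠ 0 :=
    det_vandermonde_ne_zero_iff.2 (hv.comp (Fin.castLE_injective _))
  calc min p q = (vandermonde (v ∘ Fin.castLE (min_le_left p q))).rank := by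
        rw [rank_of_det_ne_zero hdet, Fintype.card_fin]
    _ ≤ (rectVandermonde v 1 q).rank := hsquare ▸ rank_submatrix_le _ _ _

theorem mulVec_eq_submatrix_mulVec_of_mem_Ssub {ι : Type*} {n half : ℕ} (h : half + 1 ≤ n)
    (B : Matrix ι (Fin n) ℂ) {v : Fin n → ℂ} (hv : v ∈ Ssub n half) :
    B *ᵥ v = B.submatrix id (Fin.castLE h) *ᵥ (v ∘ Fin.castLE h) := by
  funext i
  refine (Fintype.sum_of_injective _ (Fin.castLE_injective h) _ _ (fun j hj => ?_)
    (fun _ => rfl)).symm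
  have hhalf : half < j.val := by
    by_contra! hle
    exact hj ⟨⟨j, by omega⟩, rfl⟩
  simp [hv j hhalf]

theorem map_mulVecLin_Ssub {ι : Type*} {n half : ℕ} (h : half + 1 ≤ n)
    (B : Matrix ι (Fin n) ℂ) :
    (Ssub n half).map B.mulVecLin =
      LinearMap.range (B.submatrix id (Fin.castLE h)).mulVecLin := by
  ext y
  constructor
  · rintro ⟨v, hv, rfl⟩
    exact ⟨v ∘ Fin.castLE h, (mulVec_eq_submatrix_mulVec_of_mem_Ssub h B hv).symm⟩
  · rintro ⟨c, rfl⟩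
    let v : Fin n → ℂ := fun j => if hj : j.val < half + 1 then c ⟨j, hj⟩ else 0
    have hv : v ∈ Ssub n half := fun j hj => dif_neg (by omega)
    refine ⟨v, hv, ?_⟩
    change B *ᵥ v = _ *ᵥ c
    rw [mulVec_eq_submatrix_mulVec_of_mem_Ssub h B hv]
    congr 1
    funext j
    exact dif_pos j.isLt

theorem lastT_comp_mulVecLin {ι : Type*} [Fintype ι] (a b : ℕ)
    (B : Matrix (Fin (2 * (a + b + 2))) ι ℂ) :
    lastT a b ∘ₗ B.mulVecLin =
      (B.submatrix (fun t => ⟨2 * (a + 1) + t.val, by have := t.isLt; omega⟩) id).mulVecLin :=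
  rfl

theorem DmatInv_apply_eq_pow (N : ℕ) (j k : Fin N) :
    DmatInv N j k = (N : ℂ)⁻¹ * dftRoot N ^ (j.val * k.val) := by
  rw [DmatInv, Matrix.smul_apply, conjTranspose_apply, Dmat, of_apply, dftRoot, Complex.star_def,
    ← Complex.exp_conj, ← Complex.exp_nat_mul, smul_eq_mul]
  congr 2
  simp only [map_div₀, map_neg, map_mul, Complex.conj_I, Complex.conj_ofReal, map_ofNat,
    Complex.conj_natCast]
  push_cast
  ring

theorem Vsub_eq_range_rectVandermonde (a b : ℕ) :
    Vsub a b = LinearMap.range (((2 * (a + b + 2) : ℕ) : ℂ)⁻¹ •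
      rectVandermonde (fun t : Fin (2 * (b + 1)) =>
        dftRoot (2 * (a + b + 2)) ^ (2 * (a + 1) + t.val)) 1 (a + b + 3)).mulVecLin := by
  rw [Vsub, map_mulVecLin_Ssub (by omega), ← LinearMap.range_comp,
    lastT_comp_mulVecLin, submatrix_submatrix]
  congr 2
  ext t j
  simp [DmatInv_apply_eq_pow, rectVandermonde_apply, pow_mul]

theorem finrank_Vsub (a b : ℕ) :
    Module.finrank ℂ (Vsub a b) = min (2 * (b + 1)) (a + b + 3) := by
  have hζ := isPrimitiveRoot_dftRoot (N := 2 * (a + b + 2)) (by omega)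
  have hnodes : Function.Injective fun t : Fin (2 * (b + 1)) =>
      dftRoot (2 * (a + b + 2)) ^ (2 * (a + 1) + t.val) :=
    fun s t hst => Fin.ext <| by have := hζ.pow_inj (by omega) (by omega) hst; omega
  rw [Vsub_eq_range_rectVandermonde]
  have hscalar : ((2 * (a + b + 2) : ℕ) : ℂ)⁻¹ ≠ 0 :=
    inv_ne_zero (Nat.cast_ne_zero.mpr (by omega))
  exact (rank_smul_of_mem_nonZeroDivisors _ (mem_nonZeroDivisors_of_ne_zero hscalar)).trans
    (rank_rectVandermonde_one hnodes)

/-- with `S = {v ∈ ℂ^{L+T} : v_j = 0 for j > (L+T)/2}` and `P` the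
projection onto the last `T` coordinates, `dim P(D_{L+T}⁻¹(S)) = min(T, (L+T)/2 + 1)`;
in particular `P(D_{L+T}⁻¹(S)) = ℂ^T` iff `L ≥ T − 2`.
Here `L = 2·(a+1)`, `T = 2·(b+1)`, `(L+T)/2 = a+b+2`. -/
theorem fits_forecast_dimension (a b : ℕ) :
    Module.finrank ℂ (Vsub a b) = min (2 * (b + 1)) (a + b + 3) ∧
    (Vsub a b = ⊤ ↔ 2 * (a + 1) ≥ 2 * (b + 1) - 2) := by
  refine ⟨finrank_Vsub a b, ?_⟩
  rw [Submodule.eq_top_iff_finrank_eq, finrank_Vsub, Module.finrank_fin_fun]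
  omega
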